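/- arXiv:2104.13458 — 3 statements merged into one kernel-verified Lean document; each statement's English description precedes it below -/
import Mathlib

section
/- Let L: ℝ → ℝ≥0 be a convex loss function with L(0)=0 that is linear on (0, 2+ε) for some ε>0, and let p,q ∈ [0,1] with p+q=1. If p>q, then z=1 is a global minimizer of z ↦ p·L(1−z) + q·L(1+z) over ℝ. -/
theorem fisher_min_at_one
    (L : ℝ → ℝ) (hconv : ConvexOn ℝ Set.univ L)
    (hnn : ∀ x, 0 ≤ L x) (h0 : L 0 = 0)
    (a ε : ℝ) (hε : 0 < ε)
    (hlin : ∀ u ∈ Set.Ioo (0:ℝ) (2 + ε), L u = a * u)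
    (p q : ℝ) (hp : 0 ≤ p) (hq : 0 ≤ q) (hpq : p + q = 1) (hlt : q < p) :
    ∀ z : ℝ, p * L (1 - 1) + q * L (1 + 1) ≤ p * L (1 - z) + q * L (1 + z) := by
  have ha : L 1 = a := by
    have := hlin 1 ⟨by norm_num, by linarith⟩; simpa using this
  have h2 : L 2 = 2 * a := by
    have := hlin 2 ⟨by norm_num, by linarith⟩; linarith
  intro z
  have h := hconv.2 (Set.mem_univ (1 - z)) (Set.mem_univ (1 + z))
    (by norm_num : (0:ℝ) ≤ 1/2) (by norm_num : (0:ℝ) ≤ 1/2) (by norm_num)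
  simp only [smul_eq_mul] at h
  have heq : (1/2 : ℝ) * (1 - z) + (1/2) * (1 + z) = 1 := by ring
  rw [heq] at h
  have hn1 := hnn (1 - z)
  have hn2 := hnn (1 + z)
  norm_num [h0, h2, ha] at h ⊢
  nlinarith [mul_nonneg (sub_nonneg.2 hlt.le) hn1]
end

section
/- Let L: ℝ → ℝ≥0 be a convex loss function with L(0)=0 that is linear on (0, 2+ε) for some ε>0, and let p,q ∈ [0,1] with p+q=1. If p<q, then z=−1 is a global minimizer of z ↦ p·L(1−z) + q·L(1+z) over ℝ. -/
theorem fisher_min_at_neg_one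
    (L : ℝ → ℝ) (hconv : ConvexOn ℝ Set.univ L)
    (hnn : ∀ x, 0 ≤ L x) (h0 : L 0 = 0)
    (a ε : ℝ) (hε : 0 < ε)
    (hlin : ∀ u ∈ Set.Ioo (0:ℝ) (2 + ε), L u = a * u)
    (p q : ℝ) (hp : 0 ≤ p) (hq : 0 ≤ q) (hpq : p + q = 1) (hlt : p < q) :
    ∀ z : ℝ, p * L (1 - (-1)) + q * L (1 + (-1)) ≤ p * L (1 - z) + q * L (1 + z) := by
  intro z
  have hL1 : L 1 = a * 1 := hlin 1 ⟨by norm_num, by linarith⟩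
  have ha : 0 ≤ a := by have := hnn 1; nlinarith
  have hL2 : L 2 = a * 2 := hlin 2 ⟨by norm_num, by linarith⟩
  have hkey : ∀ u : ℝ, a * u ≤ L u := by
    intro u
    rcases lt_trichotomy u 0 with hu | hu | hu
    · have h1u : (0:ℝ) < 1 - u := by linarith
      have ht : (0:ℝ) ≤ 1 / (1 - u) := by positivity
      have hs : (0:ℝ) ≤ (-u) / (1 - u) := by
        apply div_nonneg <;> linarith
      have hsum : 1 / (1 - u) + (-u) / (1 - u) = 1 := by
        field_simp
        ring
      have := hconv.2 (Set.mem_univ u) (Set.mem_univ 1) ht hs hsum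
      have heq : (1 / (1 - u)) • u + ((-u) / (1 - u)) • (1:ℝ) = 0 := by
        field_simp
        simp only [smul_eq_mul]
        field_simp
        ring
      rw [heq, h0] at this
      simp only [smul_eq_mul] at this
      rw [hL1] at this
      have h2 : 0 ≤ (1 / (1 - u)) * L u + ((-u) / (1 - u)) * (a * 1) := this
      have h3 : 0 ≤ L u + (-u) * a := by
        have := mul_le_mul_of_nonneg_left h2 (le_of_lt h1u)
        field_simp at this ⊢
        nlinarith [this]
      linarith
    · simp [hu, h0]
    · rcases lt_or_ge u 2 with hu2 | hu2
      · exact le_of_eq (hlin u ⟨hu, by linarith⟩).symm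
      · have hupos : (0:ℝ) < u := by linarith
        have ht : (0:ℝ) ≤ 1 - 1 / u := by
          have : 1 / u ≤ 1 := by
            rw [div_le_one hupos]; linarith
          linarith
        have hs : (0:ℝ) ≤ 1 / u := by positivity
        have hsum : (1 - 1 / u) + 1 / u = 1 := by ring
        have := hconv.2 (Set.mem_univ (0:ℝ)) (Set.mem_univ u) ht hs hsum
        have heq : (1 - 1 / u) • (0:ℝ) + (1 / u) • u = 1 := by
          field_simp
          simp only [smul_eq_mul, mul_zero, zero_add]
          field_simp
        rw [heq, h0, hL1] at this
        simp only [smul_eq_mul] at this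
        have h2 : a * 1 ≤ (1 - 1/u) * 0 + 1/u * L u := this
        have := mul_le_mul_of_nonneg_left h2 (le_of_lt hupos)
        have hne : u ≠ 0 := ne_of_gt hupos
        field_simp at this
        nlinarith [this]
  have h1z : a * (1 - z) ≤ L (1 - z) := hkey (1 - z)
  have h2z : a * (1 + z) ≤ L (1 + z) := hkey (1 + z)
  have hnn1 : 0 ≤ L (1 + z) := hnn _
  have hnn2 : 0 ≤ L (1 - z) := hnn _
  have : L (1 - (-1)) = a * 2 := by norm_num [hL2]
  rw [this, show (1:ℝ) + (-1) = 0 by norm_num, h0]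
  rcases le_or_gt (-1) z with hz | hz
  · nlinarith [mul_le_mul_of_nonneg_left h1z hp, mul_le_mul_of_nonneg_left h2z hq]
  · have : a * 2 ≤ a * (1 - z) := by nlinarith
    nlinarith [mul_le_mul_of_nonneg_left h1z hp, mul_le_mul_of_nonneg_left hnn1 hq]
end

section
/- For a finite sample ζ₁,…,ζ_N of real numbers and α = 1 − r/N with 1 ≤ r ≤ N an integer, the minimum over z ∈ ℝ of z + (1/(N(1−α))) Σᵢ max(ζᵢ − z, 0) equals the average of the r largest values among ζ₁,…,ζ_N. -/
theorem eel_is_top_r_average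
    (N r : ℕ) (hN : 1 ≤ N) (hr1 : 1 ≤ r) (hrN : r ≤ N)
    (ζ : Fin N → ℝ) (σ : Equiv.Perm (Fin N)) (hσ : Antitone (ζ ∘ σ)) :
    IsLeast
      (Set.range fun z : ℝ => z + (1 / (r : ℝ)) * ∑ i, max (ζ i - z) 0)
      ((1 / (r : ℝ)) * ∑ i ∈ Finset.univ.filter (fun i : Fin N => (i : ℕ) < r), ζ (σ i)) := by
  set η : Fin N → ℝ := ζ ∘ σ with hη
  have hrpos : (0 : ℝ) < r := by exact_mod_cast hr1
  set S : Finset (Fin N) := Finset.univ.filter (fun i : Fin N => (i : ℕ) < r) with hS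
  have hcard : S.card = r := by
    have : S = Finset.map (Fin.castLEEmb hrN) Finset.univ := by
      ext i
      simp [hS, Finset.mem_map, Fin.castLEEmb]
      constructor
      · intro h; exact ⟨⟨i, h⟩, rfl⟩
      · rintro ⟨a, rfl⟩; exact a.isLt
    rw [this, Finset.card_map, Finset.card_univ, Fintype.card_fin]
  have hsum_perm : ∀ z : ℝ, ∑ i, max (ζ i - z) 0 = ∑ i, max (η i - z) 0 := by
    intro z
    exact (Equiv.sum_comp σ (fun i => max (ζ i - z) 0)).symm
  have key : ∀ z : ℝ, ∑ i ∈ S, η i - r * z ≤ ∑ i, max (ζ i - z) 0 := by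
    intro z
    rw [hsum_perm z]
    have h1 : ∑ i ∈ S, η i - r * z = ∑ i ∈ S, (η i - z) := by
      rw [Finset.sum_sub_distrib, Finset.sum_const, hcard, nsmul_eq_mul]
    rw [h1]
    calc ∑ i ∈ S, (η i - z) ≤ ∑ i ∈ S, max (η i - z) 0 :=
          Finset.sum_le_sum (fun i _ => le_max_left _ _)
      _ ≤ ∑ i, max (η i - z) 0 :=
          Finset.sum_le_sum_of_subset_of_nonneg (Finset.filter_subset _ _)
            (fun i _ _ => le_max_right _ _)
  constructor
  · -- membership: z = η ⟨r-1⟩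
    have hk : r - 1 < N := lt_of_lt_of_le (Nat.sub_lt hr1 one_pos) hrN
    set k : Fin N := ⟨r - 1, hk⟩ with hkdef
    refine ⟨η k, ?_⟩
    have hsum : ∑ i, max (ζ i - η k) 0 = ∑ i ∈ S, η i - r * η k := by
      rw [hsum_perm]
      have hsplit : ∑ i, max (η i - η k) 0 = ∑ i ∈ S, max (η i - η k) 0 := by
        rw [← Finset.sum_filter_add_sum_filter_not Finset.univ (fun i : Fin N => (i : ℕ) < r)
          (fun i => max (η i - η k) 0)]
        have : ∑ i ∈ Finset.univ.filter (fun i : Fin N => ¬ (i : ℕ) < r),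
            max (η i - η k) 0 = 0 := by
          apply Finset.sum_eq_zero
          intro i hi
          simp only [Finset.mem_filter, not_lt] at hi
          have : η i ≤ η k := hσ (by
            show k ≤ i
            exact Fin.le_def.mpr (le_trans (Nat.sub_le r 1) hi.2))
          simp [max_eq_right, sub_nonpos.mpr this]
        rw [this, add_zero]
      rw [hsplit]
      have h2 : ∀ i ∈ S, max (η i - η k) 0 = η i - η k := by
        intro i hi
        simp only [hS, Finset.mem_filter] at hi
        have : η k ≤ η i := hσ (by
          show i ≤ k
          exact Fin.le_def.mpr (Nat.le_sub_one_of_lt hi.2))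
        exact max_eq_left (sub_nonneg.mpr this)
      rw [Finset.sum_congr rfl h2, Finset.sum_sub_distrib, Finset.sum_const, hcard,
        nsmul_eq_mul]
    show η k + (1 / (r : ℝ)) * ∑ i, max (ζ i - η k) 0 = (1 / (r : ℝ)) * ∑ i ∈ S, ζ (σ i)
    rw [hsum]
    have : ∑ i ∈ S, ζ (σ i) = ∑ i ∈ S, η i := rfl
    rw [this]
    field_simp
    ring
  · rintro x ⟨z, rfl⟩
    have := key z
    have h2 : (1 / (r : ℝ)) * (∑ i ∈ S, η i - r * z) ≤ (1 / (r : ℝ)) * ∑ i, max (ζ i - z) 0 :=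
      mul_le_mul_of_nonneg_left this (by positivity)
    have h3 : (1 / (r : ℝ)) * (∑ i ∈ S, η i - r * z) = (1 / (r : ℝ)) * ∑ i ∈ S, η i - z := by
      field_simp
    simp only [hS, hη, Function.comp] at h2 h3 ⊢
    linarith
end
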